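/- For a nonempty subset Y of Ω_n = {1,...,n}, the semigroup POPI_n(Y) of injective orientation-preserving partial transformations with image contained in Y is a regular semigroup if and only if Y = Ω_n. -/

import Mathlib

/-!
If `x ∉ Y` and `y ∈ Y`, the partial map `x ↦ y` lies in `POPI_n(Y)`, but every `β` with
`αβα = α` sends `y` back to `x`, so no such `β` has image in `Y`. Conversely, in `POPI_n` the
partial inverse `α⁻¹` satisfies `αα⁻¹α = α`, and it is orientation-preserving: listed along
`im α` in increasing order, its values are a cyclic rotation of the sorted domain of `α`.
-/

open scoped Classical

namespace POPIpaper

/-- Partial transformations of `Ω_n = {1,…,n}`, modelled on `Fin n`. -/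
abbrev PT (n : ℕ) := Fin n → Option (Fin n)

/-- Composition of partial transformations (apply `α` first, then `β`). -/
def comp {n : ℕ} (α β : PT n) : PT n := fun x => (α x).bind β

/-- Domain of a partial transformation. -/
noncomputable def dom {n : ℕ} (α : PT n) : Finset (Fin n) :=
  Finset.univ.filter (fun x => (α x).isSome)

/-- Image of a partial transformation. -/
noncomputable def im {n : ℕ} (α : PT n) : Finset (Fin n) :=
  Finset.univ.filter (fun y => ∃ x, α x = some y)

/-- rank(α) = |Im(α)|. -/
noncomputable def rank {n : ℕ} (α : PT n) : ℕ := (im α).card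

/-- Injectivity of a partial transformation. -/
def Inj {n : ℕ} (α : PT n) : Prop :=
  ∀ x y z : Fin n, α x = some z → α y = some z → x = y

/-- Orientation-preserving: the sequence of images, taken along the increasing
enumeration of the domain, is cyclic, i.e. some rotation of it is sorted. -/
def OP {n : ℕ} (α : PT n) : Prop :=
  ∃ k : ℕ, (((List.finRange n).filterMap α).rotate k).Pairwise (· ≤ ·)

/-- The semigroup `POPI_n(Y)` as a set of partial transformations:
injective, orientation-preserving, with image contained in `Y`. -/
def POPI (n : ℕ) (Y : Finset (Fin n)) : Set (PT n) :=
  {α | Inj α ∧ OP α ∧ ∀ x y : Fin n, α x = some y → y ∈ Y}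

/-- Regularity of `α` as an element of the subsemigroup `S`. -/
def IsRegularIn {n : ℕ} (S : Set (PT n)) (α : PT n) : Prop :=
  ∃ β ∈ S, comp (comp α β) α = α

/-- The partial identity on a subset `A`. -/
def idp {n : ℕ} (A : Finset (Fin n)) : PT n :=
  fun x => if x ∈ A then some x else none

/-- Fixed points of a partial transformation. -/
noncomputable def fix {n : ℕ} (α : PT n) : Finset (Fin n) :=
  Finset.univ.filter (fun x => α x = some x)

/-- Green's relation ℒ on the set `S`: `S¹α = S¹β`. -/
def LRel {n : ℕ} (S : Set (PT n)) (α β : PT n) : Prop :=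
  (α = β ∨ ∃ γ ∈ S, comp γ β = α) ∧ (β = α ∨ ∃ γ ∈ S, comp γ α = β)

/-- Green's relation ℛ on the set `S`: `αS¹ = βS¹`. -/
def RRel {n : ℕ} (S : Set (PT n)) (α β : PT n) : Prop :=
  (α = β ∨ ∃ γ ∈ S, comp β γ = α) ∧ (β = α ∨ ∃ γ ∈ S, comp α γ = β)

/-- Green's relation ℋ = ℒ ∩ ℛ. -/
def HRel {n : ℕ} (S : Set (PT n)) (α β : PT n) : Prop :=
  LRel S α β ∧ RRel S α β

/-- Green's relation 𝒟 = ℒ ∘ ℛ. -/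
def DRel {n : ℕ} (S : Set (PT n)) (α β : PT n) : Prop :=
  ∃ γ ∈ S, LRel S α γ ∧ RRel S γ β

/-- `Φ` is a semigroup isomorphism from the subsemigroup `S` onto `T`. -/
def IsIso {n : ℕ} (S T : Set (PT n)) (Φ : PT n → PT n) : Prop :=
  Set.BijOn Φ S T ∧ ∀ a ∈ S, ∀ b ∈ S, Φ (comp a b) = comp (Φ a) (Φ b)

/-- The product `β * l₁ * ⋯ * l_k` of a nonempty list of partial transformations. -/
def prodList {n : ℕ} (β : PT n) (l : List (PT n)) : PT n := l.foldl comp β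

theorem _root_.List.IsRotated.filterMap {α β : Type*} {l l' : List α} (h : l ~r l')
    (f : α → Option β) : l.filterMap f ~r l'.filterMap f := by
  obtain ⟨k, rfl⟩ := h
  rw [List.rotate_eq_drop_append_take_mod, List.filterMap_append,
    ← List.take_append_drop (k % l.length) l, List.filterMap_append]
  simp only [List.take_append_drop]
  exact List.isRotated_append

variable {n : ℕ}

theorem mem_im {α : PT n} {y : Fin n} : y ∈ im α ↔ ∃ x, α x = some y := by
  simp [im]

theorem Inj.apply_eq_some_of_comp_comp_self {α β : PT n} (hα : Inj α)
    (hβ : comp (comp α β) α = α) {x y : Fin n} (h : α x = some y) : β y = some x := by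
  have hx := congrFun hβ x
  simp only [comp, h, Option.bind_some] at hx
  cases hy : β y with
  | none => simp [hy] at hx
  | some z =>
    rw [hy, Option.bind_some] at hx
    rw [hα z x y hx h]

theorem comp_idp_dom (α : PT n) : comp (idp (dom α)) α = α := by
  funext x
  cases hx : α x <;> simp [comp, idp, dom, hx]

theorem filterMap_idp (A : Finset (Fin n)) (l : List (Fin n)) :
    l.filterMap (idp A) = l.filter (· ∈ A) := by
  rw [← List.filterMap_eq_filter]
  congr 1
  funext x
  simp [idp, Option.guard]

def single (x y : Fin n) : PT n := fun z => if z = x then some y else none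

theorem single_eq_some_iff {x y z w : Fin n} : single x y z = some w ↔ z = x ∧ y = w := by
  unfold single
  split_ifs with h <;> simp [h]

theorem single_self (x y : Fin n) : single x y x = some y := by
  simp [single]

theorem inj_single (x y : Fin n) : Inj (single x y) := by
  intro z₁ z₂ w h₁ h₂
  rw [(single_eq_some_iff.1 h₁).1, (single_eq_some_iff.1 h₂).1]

theorem op_single (x y : Fin n) : OP (single x y) := by
  refine ⟨0, List.pairwise_of_forall_mem_list fun a ha b hb => ?_⟩
  simp only [List.rotate_zero, List.mem_filterMap, single_eq_some_iff] at ha hb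
  obtain ⟨-, -, -, rfl⟩ := ha
  obtain ⟨-, -, -, rfl⟩ := hb
  exact le_rfl

theorem single_mem_POPI {Y : Finset (Fin n)} (x : Fin n) {y : Fin n} (hy : y ∈ Y) :
    single x y ∈ POPI n Y :=
  ⟨inj_single x y, op_single x y, fun _ _ h => (single_eq_some_iff.1 h).2 ▸ hy⟩

section pinv

noncomputable def pinv (α : PT n) : PT n :=
  fun y => if h : ∃ x, α x = some y then some h.choose else none

variable {α : PT n}

theorem pinv_eq_some_iff (hα : Inj α) {x y : Fin n} : pinv α y = some x ↔ α x = some y := by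
  unfold pinv
  split_ifs with h
  · rw [Option.some_inj]
    exact ⟨fun hx => hx ▸ h.choose_spec, hα _ _ _ h.choose_spec⟩
  · simpa using fun hx => h ⟨x, hx⟩

theorem pinv_eq_none {y : Fin n} (hy : y ∉ im α) : pinv α y = none := by
  rw [mem_im] at hy
  simp [pinv, hy]

theorem inj_pinv (hα : Inj α) : Inj (pinv α) := by
  intro y₁ y₂ x h₁ h₂
  rw [pinv_eq_some_iff hα] at h₁ h₂
  exact Option.some_inj.1 (h₁.symm.trans h₂)

theorem comp_pinv (hα : Inj α) : comp α (pinv α) = idp (dom α) := by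
  funext x
  cases hx : α x with
  | none => simp [comp, idp, dom, hx]
  | some y => simp [comp, idp, dom, hx, (pinv_eq_some_iff hα).2 hx]

theorem nodup_filterMap_finRange (hα : Inj α) : ((List.finRange n).filterMap α).Nodup :=
  (List.nodup_finRange n).filterMap fun _ _ _ => hα _ _ _

theorem rotate_filterMap_finRange_eq (hα : Inj α) {k : ℕ}
    (hk : (((List.finRange n).filterMap α).rotate k).Pairwise (· ≤ ·)) :
    ((List.finRange n).filterMap α).rotate k = (List.finRange n).filter (· ∈ im α) := by
  refine List.Perm.eq_of_pairwise' hk (((List.pairwise_lt_finRange n).filter _).imp le_of_lt) ?_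
  refine (List.perm_ext_iff_of_nodup (List.nodup_rotate.2 (nodup_filterMap_finRange hα))
    ((List.nodup_finRange n).filter _)).2 fun y => ?_
  simp [mem_im]

theorem op_pinv (hα : Inj α) (hop : OP α) : OP (pinv α) := by
  obtain ⟨k, hk⟩ := hop
  set L := List.finRange n
  have hrot : L.filterMap (pinv α) ~r L.filter (· ∈ dom α) :=
    calc L.filterMap (pinv α)
        = (L.filter (· ∈ im α)).filterMap (pinv α) := by
          rw [List.filterMap_filter]
          refine List.filterMap_congr fun y _ => ?_
          by_cases hy : y ∈ im α <;> simp [hy, pinv_eq_none]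
      _ = ((L.filterMap α).rotate k).filterMap (pinv α) := by
          rw [rotate_filterMap_finRange_eq hα hk]
      _ ~r (L.filterMap α).filterMap (pinv α) := (List.IsRotated.forall _ _).filterMap _
      _ = L.filter (· ∈ dom α) := by
          rw [List.filterMap_filterMap, ← filterMap_idp, ← comp_pinv hα]
          rfl
  obtain ⟨m, hm⟩ := hrot
  exact ⟨m, hm ▸ ((List.pairwise_lt_finRange n).filter _).imp le_of_lt⟩

theorem isRegularIn_POPI_univ (hα : α ∈ POPI n Finset.univ) :
    IsRegularIn (POPI n Finset.univ) α := by
  obtain ⟨hinj, hop, -⟩ := hα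
  refine ⟨pinv α, ⟨inj_pinv hinj, op_pinv hinj hop, fun _ _ _ => Finset.mem_univ _⟩, ?_⟩
  rw [comp_pinv hinj, comp_idp_dom]

end pinv

/-- `POPI_n(Y)` is a regular semigroup iff `Y = Ω_n`. -/
theorem popi_regular_iff_univ {n : ℕ} (Y : Finset (Fin n)) (hY : Y.Nonempty) :
    (∀ α ∈ POPI n Y, IsRegularIn (POPI n Y) α) ↔ Y = Finset.univ := by
  obtain ⟨y, hy⟩ := hY
  refine ⟨fun hreg => Finset.eq_univ_of_forall fun x => ?_, ?_⟩
  · obtain ⟨β, hβ, hαβα⟩ := hreg _ (single_mem_POPI x hy)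
    exact hβ.2.2 y x ((inj_single x y).apply_eq_some_of_comp_comp_self hαβα (single_self x y))
  · rintro rfl α hα
    exact isRegularIn_POPI_univ hα

end POPIpaper
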